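/- Let Ω ⊆ ℝⁿ be open, 1 < p < ∞, and u ∈ C¹(Ω) a feeble viscosity subsolution of ((p−2) Du ⊗ Du + |Du|² I) : D²u ≥ 0 on Ω. Then for every bounded open Ω' with closure in Ω, every x ∈ closure(Ω') with |Du(x)| = sup_{Ω'}|Du|, every X ∈ D^{2,+}u(x), every ξ ≥ 0 and a ∈ ℝ, the affine function A(z) = a + ξ ((p−2)X + tr(X) I) Du(x) · z satisfies ‖Du‖_{L^∞(Ω')} ≤ ‖Du + DA‖_{L^∞(Ω')}. -/

import Mathlib

open scoped BigOperators

/-- The gradient vector `Du(x) ∈ ℝⁿ` of a scalar function `u : ℝⁿ → ℝ`. -/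
noncomputable def gradv {n : ℕ} (u : (Fin n → ℝ) → ℝ) (x : Fin n → ℝ) : Fin n → ℝ :=
  fun i => fderiv ℝ u x (Pi.single i 1)

/-- The Euclidean norm of a vector in `ℝⁿ`. -/
noncomputable def gnorm {n : ℕ} (z : Fin n → ℝ) : ℝ :=
  Real.sqrt (∑ i, (z i) ^ 2)

/-- The feeble second-order superderivatives `D^{2,+}u(x)`: symmetric matrices `X` with
`Du(x) ≠ 0` and `u(x+z) ≤ u(x) + Du(x)·z + ½ X : z ⊗ z + o(|z|²)` as `z → 0`. -/
def D2plus {n : ℕ} (u : (Fin n → ℝ) → ℝ) (x : Fin n → ℝ) :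
    Set (Matrix (Fin n) (Fin n) ℝ) :=
  {X | X.IsSymm ∧ gradv u x ≠ 0 ∧
    ∀ ε : ℝ, 0 < ε → ∃ δ : ℝ, 0 < δ ∧ ∀ z : Fin n → ℝ, gnorm z < δ →
      u (x + z) ≤ u x + (∑ i, gradv u x i * z i)
        + (1 / 2) * (∑ i, ∑ j, X i j * z i * z j) + ε * (gnorm z) ^ 2}

/-- The `L^∞` norm `‖Du‖_{L^∞(S)}` of the gradient over a set `S`. -/
noncomputable def supDu {n : ℕ} (u : (Fin n → ℝ) → ℝ) (S : Set (Fin n → ℝ)) : ℝ :=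
  sSup ((fun y => gnorm (gradv u y)) '' S)

/-!
At a point `x` where `|Du|` attains its supremum, the subsolution inequality for `X ∈ D^{2,+}u(x)`
says exactly that `Du(x)` has nonnegative inner product with `DA = ξ ((p−2)X + tr(X) I) Du(x)`.
Hence `|Du(x) + DA| ≥ |Du(x)|`, and since `x ∈ closure Ω'` and `Du` is continuous up to the
boundary of `Ω' ⋐ Ω`, the value `|Du(x) + DA|` is bounded by `‖Du + DA‖_{L^∞(Ω')}`.
-/

open Matrix

lemma gnorm_le_gnorm_add_of_dotProduct_nonneg {n : ℕ} {w c : Fin n → ℝ} (h : 0 ≤ w ⬝ᵥ c) :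
    gnorm w ≤ gnorm (w + c) := by
  refine Real.sqrt_le_sqrt ?_
  have hc : 0 ≤ ∑ i, c i ^ 2 := Finset.sum_nonneg fun i _ => sq_nonneg _
  have hexpand : ∑ i, (w + c) i ^ 2 = ∑ i, w i ^ 2 + 2 * (w ⬝ᵥ c) + ∑ i, c i ^ 2 := by
    simp only [dotProduct, Pi.add_apply, add_sq, Finset.sum_add_distrib, Finset.mul_sum]
    ring_nf
  linarith

lemma continuous_gnorm {n : ℕ} : Continuous (gnorm : (Fin n → ℝ) → ℝ) :=
  Real.continuous_sqrt.comp (continuous_finsetSum _ fun i _ => (continuous_apply i).pow 2)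

lemma ContDiffOn.continuousOn_gradv {n : ℕ} {u : (Fin n → ℝ) → ℝ} {Ω : Set (Fin n → ℝ)}
    (hu : ContDiffOn ℝ 1 u Ω) (hΩ : IsOpen Ω) : ContinuousOn (gradv u) Ω :=
  continuousOn_pi.2 fun _ =>
    (hu.continuousOn_fderiv_of_isOpen hΩ le_rfl).clm_apply continuousOn_const

lemma dotProduct_mulVec_eq_sum_sum {ι R : Type*} [Fintype ι] [CommSemiring R]
    (X : Matrix ι ι R) (w : ι → R) : w ⬝ᵥ X *ᵥ w = ∑ i, ∑ j, X i j * (w i * w j) := by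
  simp only [dotProduct, mulVec, Finset.mul_sum]
  exact Finset.sum_congr rfl fun _ _ => Finset.sum_congr rfl fun _ _ => by ring

lemma dotProduct_smul_add_trace_smul_one_mulVec {ι R : Type*} [Fintype ι] [DecidableEq ι]
    [CommSemiring R] (q : R) (X : Matrix ι ι R) (w : ι → R) :
    w ⬝ᵥ (q • X + X.trace • 1) *ᵥ w = q * (w ⬝ᵥ X *ᵥ w) + (w ⬝ᵥ w) * X.trace := by
  simp only [add_mulVec, smul_mulVec, one_mulVec, dotProduct_add, dotProduct_smul, smul_eq_mul]
  ring

lemma le_csSup_image_of_mem_closure {α β : Type*} [TopologicalSpace α]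
    [ConditionallyCompleteLinearOrder β] [TopologicalSpace β] [OrderTopology β]
    {f : α → β} {S : Set α} {x : α} (hbdd : BddAbove (f '' S))
    (hf : ContinuousOn f (closure S)) (hx : x ∈ closure S) : f x ≤ sSup (f '' S) := by
  have hub : sSup (f '' S) ∈ upperBounds (closure (f '' S)) :=
    (upperBounds_closure (f '' S)).symm ▸ fun _ hy => le_csSup hbdd hy
  exact hub (hf.image_closure ⟨x, hx, rfl⟩)

theorem stmt11_general {n : ℕ} (Ω : Set (Fin n → ℝ)) (hΩ : IsOpen Ω) (p : ℝ)
    (u : (Fin n → ℝ) → ℝ) (hu : ContDiffOn ℝ 1 u Ω)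
    (hsub : ∀ x ∈ Ω, ∀ X ∈ D2plus u x,
      0 ≤ (p - 2) * (∑ i, ∑ j, X i j * (gradv u x i * gradv u x j)) +
        (∑ i, (gradv u x i) ^ 2) * Matrix.trace X) :
    ∀ Ω' : Set (Fin n → ℝ), IsOpen Ω' → Bornology.IsBounded Ω' → closure Ω' ⊆ Ω →
      ∀ x ∈ closure Ω', gnorm (gradv u x) = supDu u Ω' →
      ∀ X ∈ D2plus u x, ∀ ξ : ℝ, 0 ≤ ξ → ∀ _a : ℝ,
        supDu u Ω' ≤
          sSup ((fun y => gnorm (gradv u y +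
            ξ • ((p - 2) • X + Matrix.trace X • (1 : Matrix (Fin n) (Fin n) ℝ)).mulVec
              (gradv u x))) '' Ω') := by
  intro Ω' _ hbdd hcl x hx hsup X hX ξ hξ _
  set c := ξ • ((p - 2) • X + X.trace • (1 : Matrix (Fin n) (Fin n) ℝ)) *ᵥ gradv u x
  have hdot : 0 ≤ gradv u x ⬝ᵥ c := by
    rw [dotProduct_smul, dotProduct_smul_add_trace_smul_one_mulVec, dotProduct_mulVec_eq_sum_sum,
      smul_eq_mul]
    exact mul_nonneg hξ (by simpa only [dotProduct, sq] using hsub x (hcl hx) X hX)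
  set f := fun y => gnorm (gradv u y + c)
  have hf : ContinuousOn f (closure Ω') :=
    continuous_gnorm.comp_continuousOn
      (((hu.continuousOn_gradv hΩ).mono hcl).add continuousOn_const)
  have hcompact : IsCompact (closure Ω') :=
    Metric.isCompact_of_isClosed_isBounded isClosed_closure hbdd.closure
  have hbddf : BddAbove (f '' Ω') :=
    (hcompact.image_of_continuousOn hf).bddAbove.mono (Set.image_mono subset_closure)
  calc supDu u Ω' = gnorm (gradv u x) := hsup.symm
    _ ≤ gnorm (gradv u x + c) := gnorm_le_gnorm_add_of_dotProduct_nonneg hdot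
    _ ≤ _ := le_csSup_image_of_mem_closure (f := f) hbddf hf hx

/-- Theorem 4.3, (b) ⇒ (c): if `u ∈ C¹(Ω)` is a feeble viscosity
subsolution of `((p−2) Du ⊗ Du + |Du|² I) : D²u ≥ 0` on `Ω`, then for every `Ω' ⋐ Ω`,
`x ∈ Ω'(u)`, `X ∈ D^{2,+}u(x)`, `ξ ≥ 0`, `a ∈ ℝ`, the affine function
`A(z) = a + ξ ((p−2)X + tr(X) I) Du(x) · z` satisfies
`‖Du‖_{L^∞(Ω')} ≤ ‖Du + DA‖_{L^∞(Ω')}`. -/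
theorem stmt11 {n : ℕ} (Ω : Set (Fin n → ℝ)) (hΩ : IsOpen Ω) (p : ℝ)
    (hp1 : 1 < p)
    (u : (Fin n → ℝ) → ℝ) (hu : ContDiffOn ℝ 1 u Ω)
    (hsub : ∀ x ∈ Ω, ∀ X ∈ D2plus u x,
      0 ≤ (p - 2) * (∑ i, ∑ j, X i j * (gradv u x i * gradv u x j)) +
        (∑ i, (gradv u x i) ^ 2) * Matrix.trace X) :
    ∀ Ω' : Set (Fin n → ℝ), IsOpen Ω' → Bornology.IsBounded Ω' → closure Ω' ⊆ Ω →
      ∀ x ∈ closure Ω', gnorm (gradv u x) = supDu u Ω' →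
      ∀ X ∈ D2plus u x, ∀ ξ : ℝ, 0 ≤ ξ → ∀ _a : ℝ,
        supDu u Ω' ≤
          sSup ((fun y => gnorm (gradv u y +
            ξ • ((p - 2) • X + Matrix.trace X • (1 : Matrix (Fin n) (Fin n) ℝ)).mulVec
              (gradv u x))) '' Ω') :=
  stmt11_general Ω hΩ p u hu hsub
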